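/- arXiv:0911.3973 — 4 statements merged into one kernel-verified Lean document; each statement's English description precedes it below -/
import Mathlib

section
/- Let U be multiplication by a nonnegative continuous function u on L²[0,1] with min u = 0, and let K be a compact self-adjoint operator on L²[0,1] having only finitely many positive eigenvalues, say n−1 of them. Then H = U − K has at most n−1 eigenvalues (counted with multiplicity) strictly below 0 = inf σ_e(H). -/
/-!
Let `V` be the span of the eigenspaces of `K` for positive eigenvalues and `W` the span of the
eigenspaces of `H = U - K` for negative eigenvalues. The quadratic form of `H` is negative
definite on `W`. The subspace `Vᗮ` is `K`-invariant, and the compression `P K P` (with `P` the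
orthogonal projection onto `Vᗮ`) is compact, self-adjoint and has no positive eigenvalue; by the
Fredholm alternative its spectrum is nonpositive, so `⟪x, K x⟫ ≤ 0` on `Vᗮ`. Since `U ≥ 0`, the
form of `H` is nonnegative on `Vᗮ`. Hence `W ∩ Vᗮ = 0`, and `W` embeds into `V` via the
projection along `Vᗮ`.
-/

open MeasureTheory Set Filter

noncomputable section

/-- Lebesgue measure restricted to `[0,1]`. -/
abbrev μ01 : Measure ℝ := volume.restrict (Set.Icc 0 1)

/-- The Hilbert space `L²[0,1]` of complex-valued square-integrable functions. -/
abbrev L2 : Type := Lp ℂ 2 μ01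

/-- The essential spectrum: the spectrum minus the isolated eigenvalues of finite
multiplicity. -/
def essSpec {H : Type*} [NormedAddCommGroup H] [InnerProductSpace ℂ H]
    (A : H →L[ℂ] H) : Set ℂ :=
  spectrum ℂ A \
    {z | Module.End.HasEigenvalue (A : H →ₗ[ℂ] H) z ∧
      FiniteDimensional ℂ (Module.End.eigenspace (A : H →ₗ[ℂ] H) z) ∧
      ∃ ε > 0, spectrum ℂ A ∩ Metric.ball z ε = {z}}

open RCLike Module Module.End

theorem Module.End.iSup_mem_invtSubmodule {R M : Type*} {ι : Sort*} [Semiring R]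
    [AddCommMonoid M] [Module R M] {f : End R M} {p : ι → Submodule R M}
    (h : ∀ i, p i ∈ f.invtSubmodule) :
    ⨆ i, p i ∈ f.invtSubmodule := by
  rw [mem_invtSubmodule_iff_map_le, Submodule.map_iSup]
  exact iSup_mono fun i => (mem_invtSubmodule_iff_map_le f).mp (h i)

theorem Submodule.finiteDimensional_and_finrank_le_of_disjoint_of_isCompl {K V : Type*}
    [DivisionRing K] [AddCommGroup V] [Module K V] {p q W : Submodule K V} (hpq : IsCompl p q)
    [FiniteDimensional K p] (hW : Disjoint W q) :
    FiniteDimensional K W ∧ finrank K W ≤ finrank K p := by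
  have hinj : Function.Injective ((projectionOnto p q hpq).comp W.subtype) := by
    refine (injective_iff_map_eq_zero _).mpr fun w hw => ?_
    rw [LinearMap.comp_apply, projectionOnto_apply_eq_zero_iff] at hw
    exact Subtype.ext (disjoint_def.mp hW w w.2 hw)
  exact ⟨.of_injective _ hinj, LinearMap.finrank_le_finrank_of_injective hinj⟩

theorem isPositive_of_ae_eq_mul {α 𝕜 : Type*} [RCLike 𝕜] [MeasurableSpace α] {μ : Measure α}
    {u : α → ℝ} (hu : 0 ≤ᵐ[μ] u) {U : Lp 𝕜 2 μ →L[𝕜] Lp 𝕜 2 μ}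
    (hU : ∀ f : Lp 𝕜 2 μ, U f =ᵐ[μ] fun t => (u t : 𝕜) * f t) : U.IsPositive := by
  refine ⟨fun f g => ?_, fun f => ?_⟩
  · simp only [ContinuousLinearMap.coe_coe, L2.inner_def]
    refine integral_congr_ae ?_
    filter_upwards [hU f, hU g] with t hf hg
    simp only [inner_apply, hf, hg, map_mul, conj_ofReal]
    ring
  · rw [ContinuousLinearMap.reApplyInnerSelf, L2.inner_def,
      ← integral_re (L2.integrable_inner _ _)]
    refine integral_nonneg_of_ae ?_
    filter_upwards [hU f, hu] with t hf ht
    rw [Pi.zero_apply, inner_apply, hf, (starRingEnd 𝕜).map_mul, conj_ofReal, mul_left_comm,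
      mul_conj, ← ofReal_pow, ← ofReal_mul, ofReal_re]
    exact mul_nonneg ht (sq_nonneg _)

namespace LinearMap.IsSymmetric

variable {𝕜 E : Type*} [RCLike 𝕜] [NormedAddCommGroup E] [InnerProductSpace 𝕜 E]
  {T : E →ₗ[𝕜] E}

theorem re_inner_sum_apply_sum_of_eigenvectors (hT : T.IsSymmetric) (s : Finset ℝ) {v : ℝ → E}
    (hv : ∀ r ∈ s, T (v r) = (r : 𝕜) • v r) :
    re (inner 𝕜 (∑ r ∈ s, v r) (T (∑ r ∈ s, v r))) = ∑ r ∈ s, r * ‖v r‖ ^ 2 := by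
  have horth : ∀ r ∈ s, ∀ r' ∈ s, r' ≠ r → inner 𝕜 (v r') (v r) = 0 := fun r hr r' hr' hne => by
    simpa using hT.orthogonalFamily_eigenspaces (ofReal_injective.ne hne)
      ⟨v r', mem_eigenspace_iff.mpr (hv r' hr')⟩ ⟨v r, mem_eigenspace_iff.mpr (hv r hr)⟩
  rw [map_sum, Finset.sum_congr rfl hv, inner_sum, map_sum]
  refine Finset.sum_congr rfl fun r hr => ?_
  rw [inner_smul_right, sum_inner, Finset.sum_eq_single_of_mem r hr (horth r hr),
    inner_self_eq_norm_sq_to_K, ← ofReal_pow, ← ofReal_mul, ofReal_re]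

theorem re_inner_apply_self_neg_of_mem_iSup_eigenspace_neg (hT : T.IsSymmetric) {x : E}
    (hx : x ∈ ⨆ r : ℝ, ⨆ _ : r < 0, eigenspace T (r : 𝕜)) (hx0 : x ≠ 0) :
    re (inner 𝕜 x (T x)) < 0 := by
  obtain ⟨a, ha, rfl⟩ := (Submodule.mem_iSup_iff_exists_finsupp _ x).mp hx
  have hsupp : ∀ r ∈ a.support, r < 0 ∧ T (a r) = (r : 𝕜) • a r := fun r hr => by
    by_cases hneg : r < 0
    · exact ⟨hneg, mem_eigenspace_iff.mp (by simpa [iSup_pos hneg] using ha r)⟩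
    · exact absurd (by simpa [iSup_neg hneg] using ha r) (Finsupp.mem_support_iff.mp hr)
  have hne : a.support.Nonempty := by
    rw [Finset.nonempty_iff_ne_empty]
    rintro h
    exact hx0 (by simp [Finsupp.sum, h])
  rw [Finsupp.sum, hT.re_inner_sum_apply_sum_of_eigenvectors _ fun r hr => (hsupp r hr).2]
  refine Finset.sum_neg (fun r hr => mul_neg_of_neg_of_pos (hsupp r hr).1 ?_) hne
  exact pow_pos (norm_pos_iff.mpr (Finsupp.mem_support_iff.mp hr)) 2

end LinearMap.IsSymmetric

namespace IsCompactOperator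

variable {E : Type*} [NormedAddCommGroup E] [InnerProductSpace ℂ E] [CompleteSpace E]
  {T : E →L[ℂ] E}

theorem nonpos_of_forall_pos_not_hasEigenvalue (hT : IsCompactOperator T)
    (hsa : IsSelfAdjoint T) (h : ∀ r : ℝ, 0 < r → ¬ HasEigenvalue (T : E →ₗ[ℂ] E) r) :
    T ≤ 0 := by
  have := (le_algebraMap_iff_spectrum_le (R := ℝ) (r := 0) hsa).mpr fun r hr => by
    by_contra! hpos
    exact h r hpos <| (hT.hasEigenvalue_iff_mem_spectrum (by exact_mod_cast hpos.ne')).mpr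
      (spectrum.algebraMap_mem ℂ hr)
  simpa using this

theorem re_inner_apply_self_nonpos_of_mem (hT : IsCompactOperator T) (hsa : IsSelfAdjoint T)
    {M : Submodule ℂ E} [M.HasOrthogonalProjection] (hM : M ∈ invtSubmodule (T : E →ₗ[ℂ] E))
    (h : ∀ r : ℝ, 0 < r → Disjoint M (eigenspace (T : E →ₗ[ℂ] E) r)) {x : E} (hx : x ∈ M) :
    re (inner ℂ x (T x)) ≤ 0 := by
  set S := M.starProjection ∘L T ∘L M.starProjection
  have hS : ∀ y ∈ M, S y = T y := fun y hy => by
    have hTy : T y ∈ M := hM hy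
    simp [S, M.starProjection_eq_self_iff.mpr hy, M.starProjection_eq_self_iff.mpr hTy]
  have hSnonpos : S ≤ 0 := by
    refine nonpos_of_forall_pos_not_hasEigenvalue
      ((hT.comp_clm M.starProjection).clm_comp M.starProjection) (hsa.conj_starProjection M)
      fun r hr hev => ?_
    obtain ⟨v, hv⟩ := hev.exists_hasEigenvector
    have hSv : S v = (r : ℂ) • v := hv.apply_eq_smul
    have hvM : v ∈ M := by
      have : v = (r : ℂ)⁻¹ • S v := by
        rw [hSv, smul_smul, inv_mul_cancel₀ (by exact_mod_cast hr.ne'), one_smul]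
      rw [this]
      exact M.smul_mem _ (M.starProjection_apply_mem _)
    have hvT : v ∈ eigenspace (T : E →ₗ[ℂ] E) r := mem_eigenspace_iff.mpr (hS v hvM ▸ hSv)
    exact hv.2 ((Submodule.disjoint_def.mp (h r hr)) v hvM hvT)
  have := ((ContinuousLinearMap.le_def S 0).mp hSnonpos).re_inner_nonneg_right x
  simpa [hS x hx] using this

theorem re_inner_apply_self_nonpos_of_mem_orthogonal_iSup_eigenspace_pos
    (hT : IsCompactOperator T) (hsa : IsSelfAdjoint T) {x : E}
    (hx : x ∈ (⨆ r : ℝ, ⨆ _ : 0 < r, eigenspace (T : E →ₗ[ℂ] E) (r : ℂ))ᗮ) :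
    re (inner ℂ x (T x)) ≤ 0 := by
  set V := ⨆ r : ℝ, ⨆ _ : 0 < r, eigenspace (T : E →ₗ[ℂ] E) (r : ℂ)
  have hV : V ∈ invtSubmodule (T : E →ₗ[ℂ] E) := iSup_mem_invtSubmodule fun r =>
    iSup_mem_invtSubmodule fun _ => eigenspace_mem_invtSubmodule _ _
  have hVperp : Vᗮ ∈ invtSubmodule (T : E →ₗ[ℂ] E) :=
    hsa.isSymmetric.orthogonalComplement_mem_invtSubmodule hV
  have hdisj (r : ℝ) (hr : 0 < r) : Disjoint Vᗮ (eigenspace (T : E →ₗ[ℂ] E) r) :=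
    V.orthogonal_disjoint.symm.mono_right <|
      le_iSup₂_of_le (f := fun (r : ℝ) (_ : 0 < r) => eigenspace (T : E →ₗ[ℂ] E) (r : ℂ)) r hr
        le_rfl
  exact hT.re_inner_apply_self_nonpos_of_mem hsa hVperp hdisj hx

end IsCompactOperator

theorem stmt5_general (u : ℝ → ℝ)
    (hupos : ∀ t ∈ Icc (0:ℝ) 1, 0 ≤ u t)
    (U K : L2 →L[ℂ] L2)
    (hU : ∀ f : L2, (U f : ℝ → ℂ) =ᵐ[μ01] fun t => (u t : ℂ) * f t)
    (hKc : IsCompactOperator (K : L2 → L2)) (hKsa : IsSelfAdjoint K) (m : ℕ)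
    (hfin : FiniteDimensional ℂ
      ↥(⨆ r : ℝ, ⨆ _ : 0 < r, Module.End.eigenspace (K : L2 →ₗ[ℂ] L2) (r : ℂ)))
    (hcount : Module.finrank ℂ
      ↥(⨆ r : ℝ, ⨆ _ : 0 < r, Module.End.eigenspace (K : L2 →ₗ[ℂ] L2) (r : ℂ)) = m) :
    FiniteDimensional ℂ
      ↥(⨆ r : ℝ, ⨆ _ : r < 0,
        Module.End.eigenspace ((U - K : L2 →L[ℂ] L2) : L2 →ₗ[ℂ] L2) (r : ℂ)) ∧
    Module.finrank ℂ
      ↥(⨆ r : ℝ, ⨆ _ : r < 0,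
        Module.End.eigenspace ((U - K : L2 →L[ℂ] L2) : L2 →ₗ[ℂ] L2) (r : ℂ)) ≤ m := by
  have hUpos : U.IsPositive :=
    isPositive_of_ae_eq_mul (ae_restrict_of_forall_mem measurableSet_Icc hupos) hU
  have hsymm : ((U - K : L2 →L[ℂ] L2) : L2 →ₗ[ℂ] L2).IsSymmetric :=
    (hUpos.isSelfAdjoint.sub hKsa).isSymmetric
  set V := ⨆ r : ℝ, ⨆ _ : 0 < r, eigenspace (K : L2 →ₗ[ℂ] L2) (r : ℂ)
  have hdisj : Disjoint (⨆ r : ℝ, ⨆ _ : r < 0,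
      eigenspace ((U - K : L2 →L[ℂ] L2) : L2 →ₗ[ℂ] L2) (r : ℂ)) Vᗮ := by
    refine Submodule.disjoint_def.mpr fun x hxW hxV => by_contra fun hx0 => ?_
    have hH := hsymm.re_inner_apply_self_neg_of_mem_iSup_eigenspace_neg hxW hx0
    have hK := hKc.re_inner_apply_self_nonpos_of_mem_orthogonal_iSup_eigenspace_pos hKsa hxV
    have hUx := hUpos.re_inner_nonneg_right x
    rw [ContinuousLinearMap.coe_coe, sub_apply, inner_sub_right, map_sub] at hH
    linarith
  exact hcount ▸
    V.finiteDimensional_and_finrank_le_of_disjoint_of_isCompl V.isCompl_orthogonal hdisj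

/-- If the compact self-adjoint operator `K` has only finitely many positive
eigenvalues, `m` of them counted with multiplicity (i.e. the span of the eigenspaces
for positive eigenvalues has dimension `m`), then `U - K` has at most `m` eigenvalues
(counted with multiplicity) strictly below `0`, the bottom of its essential spectrum. -/
theorem stmt5 (u : ℝ → ℝ) (hu : ContinuousOn u (Icc 0 1))
    (hupos : ∀ t ∈ Icc (0:ℝ) 1, 0 ≤ u t) (hu0 : ∃ t ∈ Icc (0:ℝ) 1, u t = 0)
    (U K : L2 →L[ℂ] L2)
    (hU : ∀ f : L2, (U f : ℝ → ℂ) =ᵐ[μ01] fun t => (u t : ℂ) * f t)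
    (hKc : IsCompactOperator (K : L2 → L2)) (hKsa : IsSelfAdjoint K) (m : ℕ)
    (hfin : FiniteDimensional ℂ
      ↥(⨆ r : ℝ, ⨆ _ : 0 < r, Module.End.eigenspace (K : L2 →ₗ[ℂ] L2) (r : ℂ)))
    (hcount : Module.finrank ℂ
      ↥(⨆ r : ℝ, ⨆ _ : 0 < r, Module.End.eigenspace (K : L2 →ₗ[ℂ] L2) (r : ℂ)) = m) :
    FiniteDimensional ℂ
      ↥(⨆ r : ℝ, ⨆ _ : r < 0,
        Module.End.eigenspace ((U - K : L2 →L[ℂ] L2) : L2 →ₗ[ℂ] L2) (r : ℂ)) ∧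
    Module.finrank ℂ
      ↥(⨆ r : ℝ, ⨆ _ : r < 0,
        Module.End.eigenspace ((U - K : L2 →L[ℂ] L2) : L2 →ₗ[ℂ] L2) (r : ℂ)) ≤ m :=
  stmt5_general u hupos U K hU hKc hKsa m hfin hcount
end
end

section
/- Let U be multiplication by a nonnegative continuous function u on L²[0,1] with max u = u_max, and let K be a compact self-adjoint operator with only finitely many negative eigenvalues, say n−1 of them. Then H = U − K has at most n−1 eigenvalues strictly above u_max = sup σ_e(H). -/
/-!
On the span `V` of the eigenvectors of `U - K` with eigenvalue above `u_max`, the quadratic form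
of `U - K` exceeds `u_max ‖f‖²` while that of `U` is at most `u_max ‖f‖²`; hence the form of `K`
is negative definite on `V`. On the other hand `K` restricts to a compact self-adjoint operator
on the orthogonal complement of the span `N` of its negative eigenspaces, without negative
eigenvalues there; as the nonzero spectrum of a compact operator consists of eigenvalues, this
restriction has nonnegative spectrum, i.e. it is a positive operator. So `V` meets `Nᗮ` trivially, and the orthogonal projection onto `N` embeds `V` into `N`.
-/

open MeasureTheory Set Filter

noncomputable section

open RCLike Module.End
open scoped InnerProductSpace

section MultiplicationOperator

variable {α 𝕜 : Type*} [MeasurableSpace α] [RCLike 𝕜] {μ : Measure α} {u : α → ℝ}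
  {U : Lp 𝕜 2 μ →L[𝕜] Lp 𝕜 2 μ}

theorem isSymmetric_of_ae_eq_mul (hU : ∀ f : Lp 𝕜 2 μ, U f =ᵐ[μ] fun t => (u t : 𝕜) * f t) :
    (U : Lp 𝕜 2 μ →ₗ[𝕜] Lp 𝕜 2 μ).IsSymmetric := by
  intro f g
  simp only [ContinuousLinearMap.coe_coe, L2.inner_def]
  refine integral_congr_ae ?_
  filter_upwards [hU f, hU g] with t hf hg
  simp only [inner_apply, hf, hg, map_mul, conj_ofReal]
  ring

theorem re_inner_le_of_ae_eq_mul (hU : ∀ f : Lp 𝕜 2 μ, U f =ᵐ[μ] fun t => (u t : 𝕜) * f t)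
    {s : ℝ} (hs : ∀ᵐ t ∂μ, u t ≤ s) (f : Lp 𝕜 2 μ) :
    re ⟪U f, f⟫_𝕜 ≤ s * ‖f‖ ^ 2 := by
  rw [← inner_self_eq_norm_sq (𝕜 := 𝕜), L2.inner_def, L2.inner_def,
    ← integral_re (L2.integrable_inner _ _), ← integral_re (L2.integrable_inner _ _),
    ← integral_const_mul]
  refine integral_mono_ae (L2.integrable_inner _ _).re
    ((L2.integrable_inner _ _).re.const_mul s) ?_
  filter_upwards [hU f, hs] with t hf ht
  rw [hf, ← smul_eq_mul, inner_smul_left, conj_ofReal, re_ofReal_mul, inner_self_eq_norm_sq]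
  gcongr

end MultiplicationOperator

section InnerProductSpace

variable {𝕜 E : Type*} [RCLike 𝕜] [NormedAddCommGroup E] [InnerProductSpace 𝕜 E]

theorem LinearMap.IsSymmetric.mul_norm_sq_lt_re_inner {T : E →ₗ[𝕜] E} (hT : T.IsSymmetric)
    {c : ℝ} {x : E} (hx : x ∈ ⨆ r : ℝ, ⨆ _ : c < r, eigenspace T (r : 𝕜)) (hx0 : x ≠ 0) :
    c * ‖x‖ ^ 2 < re ⟪T x, x⟫_𝕜 := by
  rw [iSup_subtype', Submodule.mem_iSup_iff_exists_finsupp] at hx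
  obtain ⟨l, hl, rfl⟩ := hx
  let v (r : {r : ℝ // c < r}) : eigenspace T (r : 𝕜) := ⟨l r, hl r⟩
  have horth := hT.orthogonalFamily_eigenspaces.comp
    (ofReal_injective.comp Subtype.val_injective :
      Function.Injective fun r : {r : ℝ // c < r} => ((r : ℝ) : 𝕜))
  have hTv (r : {r : ℝ // c < r}) : T (v r) = ((r : 𝕜) • v r : eigenspace T (r : 𝕜)) :=
    mem_eigenspace_iff.mp (hl r)
  have hsum : l.sum (fun _ y => y) = ∑ r ∈ l.support, (v r : E) := rfl
  have hsupp : l.support.Nonempty := by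
    contrapose! hx0
    simp [hsum, hx0]
  have hinner := horth.inner_sum (fun r => (r : 𝕜) • v r) v l.support
  have hnorm := horth.norm_sum v l.support
  simp only [Submodule.coe_subtypeₗᵢ, Submodule.subtype_apply] at hinner hnorm
  rw [hsum, map_sum]
  simp only [hTv]
  rw [hinner, hnorm, Finset.mul_sum, map_sum]
  refine Finset.sum_lt_sum_of_nonempty hsupp fun r hr => ?_
  rw [inner_smul_left, conj_ofReal, re_ofReal_mul, inner_self_eq_norm_sq]
  have hvr : v r ≠ 0 := fun h => Finsupp.mem_support_iff.mp hr (congrArg Subtype.val h)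
  gcongr
  exact r.2

theorem Submodule.finiteDimensional_and_finrank_le_of_disjoint_orthogonal
    {V N : Submodule 𝕜 E} [FiniteDimensional 𝕜 N] (h : Disjoint V Nᗮ) :
    FiniteDimensional 𝕜 V ∧ Module.finrank 𝕜 V ≤ Module.finrank 𝕜 N := by
  have hinj : Function.Injective (N.orthogonalProjectionOnto.toLinearMap ∘ₗ V.subtype) := by
    rw [← LinearMap.ker_eq_bot, Submodule.eq_bot_iff]
    intro v hv
    have hvN : (v : E) ∈ Nᗮ := orthogonalProjectionOnto_eq_zero_iff.mp hv
    exact Subtype.ext (Submodule.disjoint_def.mp h _ v.2 hvN)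
  exact ⟨.of_injective _ hinj, LinearMap.finrank_le_finrank_of_injective hinj⟩

end InnerProductSpace

section CompactOperator

variable {E : Type*} [NormedAddCommGroup E] [InnerProductSpace ℂ E] [CompleteSpace E]

theorem IsCompactOperator.isPositive_of_not_hasEigenvalue_neg {T : E →L[ℂ] E}
    (hTc : IsCompactOperator T) (hT : T.IsSymmetric)
    (h : ∀ r : ℝ, r < 0 → ¬ HasEigenvalue (T : E →ₗ[ℂ] E) r) : T.IsPositive := by
  rw [← ContinuousLinearMap.nonneg_iff_isPositive,
    StarOrderedRing.nonneg_iff_spectrum_nonneg (R := ℝ) T hT.isSelfAdjoint]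
  intro r hr
  by_contra! hneg
  refine h r hneg ((hTc.hasEigenvalue_iff_mem_spectrum (by exact_mod_cast hneg.ne)).mpr ?_)
  exact spectrum.algebraMap_mem ℂ hr

theorem IsCompactOperator.re_inner_nonneg_of_mem_orthogonal {T : E →L[ℂ] E}
    (hTc : IsCompactOperator T) (hT : T.IsSymmetric) {x : E}
    (hx : x ∈ (⨆ r : ℝ, ⨆ _ : r < 0, eigenspace (T : E →ₗ[ℂ] E) r)ᗮ) :
    0 ≤ re ⟪T x, x⟫_ℂ := by
  set N := ⨆ r : ℝ, ⨆ _ : r < 0, eigenspace (T : E →ₗ[ℂ] E) r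
  have hinv : ∀ v ∈ Nᗮ, T v ∈ Nᗮ := by
    rw [show N = ⨆ r : {r : ℝ // r < 0}, eigenspace (T : E →ₗ[ℂ] E) (r : ℝ) from iSup_subtype',
      ← Submodule.iInf_orthogonal]
    exact LinearMap.iInf_invariant _ fun r => hT.invariant_orthogonalComplement_eigenspace _
  have hS : (T.restrict hinv).IsPositive := by
    refine (hTc.restrict' hinv).isPositive_of_not_hasEigenvalue_neg
      (hT.restrict_invariant hinv) fun r hr hrS => ?_
    obtain ⟨g, hg, hg0⟩ := hrS.exists_hasEigenvector
    have hgN : (g : E) ∈ N :=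
      (le_iSup₂_of_le r hr le_rfl : eigenspace (T : E →ₗ[ℂ] E) r ≤ N)
        (mem_eigenspace_iff.mpr (congrArg Subtype.val (mem_eigenspace_iff.mp hg)))
    exact hg0 (Subtype.ext (Submodule.disjoint_def.mp N.orthogonal_disjoint _ hgN g.2))
  exact hS.re_inner_nonneg_left ⟨x, hx⟩

end CompactOperator

theorem stmt6_general (u : ℝ → ℝ) (hu : ContinuousOn u (Icc 0 1))
    (U K : L2 →L[ℂ] L2)
    (hU : ∀ f : L2, (U f : ℝ → ℂ) =ᵐ[μ01] fun t => (u t : ℂ) * f t)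
    (hKc : IsCompactOperator (K : L2 → L2)) (hKsa : IsSelfAdjoint K) (m : ℕ)
    (hfin : FiniteDimensional ℂ
      ↥(⨆ r : ℝ, ⨆ _ : r < 0, Module.End.eigenspace (K : L2 →ₗ[ℂ] L2) (r : ℂ)))
    (hcount : Module.finrank ℂ
      ↥(⨆ r : ℝ, ⨆ _ : r < 0, Module.End.eigenspace (K : L2 →ₗ[ℂ] L2) (r : ℂ)) = m) :
    FiniteDimensional ℂ
      ↥(⨆ r : ℝ, ⨆ _ : sSup (u '' Icc (0:ℝ) 1) < r,
        Module.End.eigenspace ((U - K : L2 →L[ℂ] L2) : L2 →ₗ[ℂ] L2) (r : ℂ)) ∧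
    Module.finrank ℂ
      ↥(⨆ r : ℝ, ⨆ _ : sSup (u '' Icc (0:ℝ) 1) < r,
        Module.End.eigenspace ((U - K : L2 →L[ℂ] L2) : L2 →ₗ[ℂ] L2) (r : ℂ)) ≤ m := by
  set s := sSup (u '' Icc (0:ℝ) 1)
  have hus : ∀ᵐ t ∂μ01, u t ≤ s := by
    filter_upwards [ae_restrict_mem measurableSet_Icc] with t ht
    exact le_csSup (isCompact_Icc.image_of_continuousOn hu).bddAbove (mem_image_of_mem u ht)
  have hKsym : (K : L2 →ₗ[ℂ] L2).IsSymmetric := hKsa.isSymmetric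
  have hdisj : Disjoint
      (⨆ r : ℝ, ⨆ _ : s < r, eigenspace ((U - K : L2 →L[ℂ] L2) : L2 →ₗ[ℂ] L2) (r : ℂ))
      (⨆ r : ℝ, ⨆ _ : r < 0, eigenspace (K : L2 →ₗ[ℂ] L2) (r : ℂ))ᗮ := by
    refine Submodule.disjoint_def.mpr fun f hfV hfN => ?_
    by_contra hf0
    have hUK := ((isSymmetric_of_ae_eq_mul hU).sub hKsym).mul_norm_sq_lt_re_inner hfV hf0
    have hUf := re_inner_le_of_ae_eq_mul hU hus f
    have hKf := hKc.re_inner_nonneg_of_mem_orthogonal hKsym hfN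
    rw [LinearMap.sub_apply, inner_sub_left, map_sub] at hUK
    simp only [ContinuousLinearMap.coe_coe] at hUK
    linarith
  exact hcount ▸ Submodule.finiteDimensional_and_finrank_le_of_disjoint_orthogonal hdisj

/-- If the compact self-adjoint operator `K` has only finitely many negative
eigenvalues, `m` of them counted with multiplicity, then `U - K` has at most `m`
eigenvalues (counted with multiplicity) strictly above `u_max = sup u`, the top of its
essential spectrum. -/
theorem stmt6 (u : ℝ → ℝ) (hu : ContinuousOn u (Icc 0 1))
    (hupos : ∀ t ∈ Icc (0:ℝ) 1, 0 ≤ u t)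
    (U K : L2 →L[ℂ] L2)
    (hU : ∀ f : L2, (U f : ℝ → ℂ) =ᵐ[μ01] fun t => (u t : ℂ) * f t)
    (hKc : IsCompactOperator (K : L2 → L2)) (hKsa : IsSelfAdjoint K) (m : ℕ)
    (hfin : FiniteDimensional ℂ
      ↥(⨆ r : ℝ, ⨆ _ : r < 0, Module.End.eigenspace (K : L2 →ₗ[ℂ] L2) (r : ℂ)))
    (hcount : Module.finrank ℂ
      ↥(⨆ r : ℝ, ⨆ _ : r < 0, Module.End.eigenspace (K : L2 →ₗ[ℂ] L2) (r : ℂ)) = m) :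
    FiniteDimensional ℂ
      ↥(⨆ r : ℝ, ⨆ _ : sSup (u '' Icc (0:ℝ) 1) < r,
        Module.End.eigenspace ((U - K : L2 →L[ℂ] L2) : L2 →ₗ[ℂ] L2) (r : ℂ)) ∧
    Module.finrank ℂ
      ↥(⨆ r : ℝ, ⨆ _ : sSup (u '' Icc (0:ℝ) 1) < r,
        Module.End.eigenspace ((U - K : L2 →L[ℂ] L2) : L2 →ₗ[ℂ] L2) (r : ℂ)) ≤ m :=
  stmt6_general u hu U K hU hKc hKsa m hfin hcount
end
end

section
/- Let H₁ and H₂ be bounded self-adjoint operators on Hilbert spaces 𝓗₁ and 𝓗₂, and set T = H₁ ⊗ I + I ⊗ H₂ on 𝓗₁ ⊗ 𝓗₂. Then σ(T) = σ(H₁) + σ(H₂) = {α + β : α ∈ σ(H₁), β ∈ σ(H₂)}. -/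
open scoped Pointwise

noncomputable section

/-!
The bilinear map `tm` is an isometry from the algebraic tensor product `H1 ⊗ H2` onto a dense
subspace of `W`, so `A ⊗ 1` and `1 ⊗ B` extend to commuting operators on `W` with spectra inside
`σ(A)` and `σ(B)`, and `T` is their sum. The bicommutant of two commuting elements of a Banach
algebra is a closed, commutative, inverse-closed subalgebra; a character of it maps `a + b` to a
sum of spectral values of `a` and `b`, which gives `σ(T) ⊆ σ(A) + σ(B)`. Conversely, for a normal
operator every spectral value is an approximate eigenvalue, and if `x`, `y` are approximate
eigenvectors of `A`, `B` for `α`, `β`, then `tm x y` is one of `T` for `α + β`.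
-/

open scoped TensorProduct

namespace Subalgebra

variable {R A : Type*} [CommRing R] [Ring A] [Algebra R A]

theorem isUnit_centralizer_iff {s : Set A} {a : centralizer R s} :
    IsUnit a ↔ IsUnit (a : A) := by
  refine ⟨IsUnit.map (centralizer R s).val, fun ⟨u, hu⟩ => ?_⟩
  have hinv : (↑u⁻¹ : A) ∈ centralizer R s := fun m hm =>
    (Commute.units_inv_right (hu ▸ (a.2 m hm).symm : Commute (↑u : A) m).symm).eq
  exact ⟨⟨a, ⟨_, hinv⟩, Subtype.ext (show (a : A) * ↑u⁻¹ = 1 from hu ▸ u.mul_inv),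
    Subtype.ext (show ↑u⁻¹ * (a : A) = 1 from hu ▸ u.inv_mul)⟩, rfl⟩

theorem spectrum_centralizer_eq {s : Set A} (a : centralizer R s) :
    spectrum R a = spectrum R (a : A) := by
  ext r
  rw [spectrum.mem_iff, spectrum.mem_iff, isUnit_centralizer_iff]
  rfl

end Subalgebra

theorem Commute.spectrum_add_subset {A : Type*} [NormedRing A] [NormedAlgebra ℂ A]
    [CompleteSpace A] {a b : A} (hab : Commute a b) :
    spectrum ℂ (a + b) ⊆ spectrum ℂ a + spectrum ℂ b := by
  set C := Subalgebra.centralizer ℂ (Subalgebra.centralizer ℂ ({a, b} : Set A) : Set A)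
  have hmul_comm : ∀ x y : C, x * y = y * x := fun x y => Subtype.ext <|
    Set.centralizer_centralizer_comm_of_comm
      (by rintro _ (rfl | rfl) _ (rfl | rfl) <;> first | rfl | exact hab.eq | exact hab.symm.eq)
      _ x.2 _ y.2
  let _ : NormedCommRing C := { (inferInstance : NormedRing C) with mul_comm := hmul_comm }
  have : CompleteSpace C := (Set.isClosed_centralizer _).completeSpace_coe
  have hsub : ({a, b} : Set A) ⊆ C := Set.subset_centralizer_centralizer
  let a' : C := ⟨a, hsub (by simp)⟩
  let b' : C := ⟨b, hsub (by simp)⟩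
  intro z hz
  rw [show a + b = ((a' + b' : C) : A) from rfl, ← Subalgebra.spectrum_centralizer_eq,
    WeakDual.CharacterSpace.mem_spectrum_iff_exists] at hz
  obtain ⟨φ, rfl⟩ := hz
  rw [map_add]
  exact Set.add_mem_add
    (Subalgebra.spectrum_centralizer_eq a' ▸ AlgHom.apply_mem_spectrum φ a')
    (Subalgebra.spectrum_centralizer_eq b' ▸ AlgHom.apply_mem_spectrum φ b')

namespace LinearIsometry

variable {𝕜 E F : Type*} [NontriviallyNormedField 𝕜]
  [NormedAddCommGroup E] [NormedSpace 𝕜 E] [NormedAddCommGroup F] [NormedSpace 𝕜 F]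
  [CompleteSpace F] (ι : E →ₗᵢ[𝕜] F) (hι : DenseRange ι)

def extendEnd : (E →L[𝕜] E) →ₐ[𝕜] (F →L[𝕜] F) :=
  have extend_apply (f : E →L[𝕜] E) (x : E) :
      (ι.toContinuousLinearMap ∘L f).extend ι.toContinuousLinearMap (ι x) = ι (f x) :=
    ContinuousLinearMap.extend_eq _ hι ι.isometry.isUniformInducing x
  have ext {g h : F →L[𝕜] F} (hgh : ∀ x, g (ι x) = h (ι x)) : g = h :=
    ContinuousLinearMap.coeFn_injective (hι.equalizer g.continuous h.continuous (funext hgh))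
  { toFun f := (ι.toContinuousLinearMap ∘L f).extend ι.toContinuousLinearMap
    map_one' := ext fun x => by simp [extend_apply]
    map_mul' f g := ext fun x => by simp [extend_apply]
    map_zero' := ext fun x => by rw [extend_apply]; simp
    map_add' f g := ext fun x => by rw [extend_apply]; simp [extend_apply]
    commutes' r := ext fun x => by rw [extend_apply]; simp [Algebra.algebraMap_eq_smul_one] }

variable {ι hι}

theorem extendEnd_apply (f : E →L[𝕜] E) (x : E) : ι.extendEnd hι f (ι x) = ι (f x) :=
  ContinuousLinearMap.extend_eq _ hι ι.isometry.isUniformInducing x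

end LinearIsometry

namespace ContinuousLinearMap

section TensorProduct

variable (𝕜 E G : Type*) [RCLike 𝕜] [NormedAddCommGroup E] [InnerProductSpace 𝕜 E]
  [NormedAddCommGroup G] [InnerProductSpace 𝕜 G]

def rTensorAlgHom : (E →L[𝕜] E) →ₐ[𝕜] (E ⊗[𝕜] G →L[𝕜] E ⊗[𝕜] G) where
  toFun f := f.rTensor G
  map_one' := rTensor_one G
  map_mul' := rTensor_mul G
  map_zero' := rTensor_zero G
  map_add' := rTensor_add G
  commutes' r := by simp [Algebra.algebraMap_eq_smul_one]

def lTensorAlgHom : (G →L[𝕜] G) →ₐ[𝕜] (E ⊗[𝕜] G →L[𝕜] E ⊗[𝕜] G) where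
  toFun f := f.lTensor E
  map_one' := lTensor_one E
  map_mul' := lTensor_mul E
  map_zero' := lTensor_zero E
  map_add' := lTensor_add E
  commutes' r := by simp [Algebra.algebraMap_eq_smul_one]

variable {𝕜 E G}

theorem commute_rTensor_lTensor (f : E →L[𝕜] E) (g : G →L[𝕜] G) :
    Commute (f.rTensor G) (g.lTensor E) := by
  refine coe_injective ?_
  simp only [toLinearMap_mul, toLinearMap_rTensor, toLinearMap_lTensor, Module.End.mul_eq_comp,
    LinearMap.rTensor_comp_lTensor, LinearMap.lTensor_comp_rTensor]

end TensorProduct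

variable {𝕜 E : Type*}

section Normed

variable [NontriviallyNormedField 𝕜] [NormedAddCommGroup E] [NormedSpace 𝕜 E]

/-- The strict inequality forces `x ≠ 0`. -/
def IsApproxEigenvalue (S : E →L[𝕜] E) (μ : 𝕜) : Prop :=
  ∀ ε > 0, ∃ x, ‖S x - μ • x‖ < ε * ‖x‖

theorem norm_algebraMap_sub_apply (S : E →L[𝕜] E) (μ : 𝕜) (x : E) :
    ‖(algebraMap 𝕜 (E →L[𝕜] E) μ - S) x‖ = ‖S x - μ • x‖ := by
  simp [Algebra.algebraMap_eq_smul_one, norm_sub_rev]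

theorem IsApproxEigenvalue.mem_spectrum {S : E →L[𝕜] E} {μ : 𝕜} (h : S.IsApproxEigenvalue μ) :
    μ ∈ spectrum 𝕜 S := by
  rintro ⟨u, hu⟩
  set K := ‖((ContinuousLinearEquiv.ofUnit u).symm : E →L[𝕜] E)‖₊
  obtain ⟨x, hx⟩ := h (K + 1)⁻¹ (by positivity)
  have hbound := bound_of_antilipschitz _ (ContinuousLinearEquiv.ofUnit u).antilipschitz x
  rw [hu, norm_algebraMap_sub_apply] at hbound
  rw [← div_eq_inv_mul, lt_div_iff₀ (by positivity)] at hx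
  nlinarith [norm_nonneg (S x - μ • x)]

theorem IsApproxEigenvalue.tensor_add {F W : Type*} [NormedAddCommGroup F] [NormedSpace 𝕜 F]
    [NormedAddCommGroup W] [NormedSpace 𝕜 W] {tm : E →ₗ[𝕜] F →ₗ[𝕜] W}
    (htm : ∀ x y, ‖tm x y‖ = ‖x‖ * ‖y‖) {A : E →L[𝕜] E} {B : F →L[𝕜] F} {T : W →L[𝕜] W}
    (hT : ∀ x y, T (tm x y) = tm (A x) y + tm x (B y)) {α β : 𝕜}
    (hα : A.IsApproxEigenvalue α) (hβ : B.IsApproxEigenvalue β) :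
    T.IsApproxEigenvalue (α + β) := by
  intro ε hε
  obtain ⟨x, hx⟩ := hα (ε / 2) (by positivity)
  obtain ⟨y, hy⟩ := hβ (ε / 2) (by positivity)
  have hy_pos : 0 < ‖y‖ := pos_of_mul_pos_right ((norm_nonneg _).trans_lt hy) (by positivity)
  refine ⟨tm x y, ?_⟩
  have hsplit : T (tm x y) - (α + β) • tm x y = tm (A x - α • x) y + tm x (B y - β • y) := by
    simp only [hT, map_sub, map_smul, LinearMap.sub_apply, LinearMap.smul_apply, add_smul]
    abel
  calc ‖T (tm x y) - (α + β) • tm x y‖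
      ≤ ‖A x - α • x‖ * ‖y‖ + ‖x‖ * ‖B y - β • y‖ := by
        rw [hsplit, ← htm, ← htm]; exact norm_add_le _ _
    _ < ε / 2 * ‖x‖ * ‖y‖ + ‖x‖ * (ε / 2 * ‖y‖) :=
        add_lt_add_of_lt_of_le (by gcongr) (by gcongr)
    _ = ε * ‖tm x y‖ := by rw [htm]; ring

end Normed

section InnerProductSpace

variable [RCLike 𝕜] [NormedAddCommGroup E] [InnerProductSpace 𝕜 E] [CompleteSpace E]
  {S : E →L[𝕜] E}

theorem isUnit_of_isStarNormal_of_antilipschitz (hS : IsStarNormal S) {K : NNReal}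
    (hK : AntilipschitzWith K S) : IsUnit S := by
  rw [isUnit_iff_bijective, bijective_iff_dense_range_and_antilipschitz,
    Submodule.topologicalClosure_eq_top_iff, IsStarNormal.orthogonal_range hS]
  exact ⟨LinearMap.ker_eq_bot.mpr hK.injective, K, hK⟩

theorem isApproxEigenvalue_of_mem_spectrum (hS : IsStarNormal S) {μ : 𝕜}
    (hμ : μ ∈ spectrum 𝕜 S) : S.IsApproxEigenvalue μ := by
  by_contra h
  simp only [IsApproxEigenvalue, not_forall, not_exists, not_lt] at h
  obtain ⟨ε, hε, hle⟩ := h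
  have hnormal : IsStarNormal (algebraMap 𝕜 (E →L[𝕜] E) μ - S) :=
    have : IsStarNormal (algebraMap 𝕜 (E →L[𝕜] E) μ) := ⟨Algebra.commute_algebraMap_right _ _⟩
    (Algebra.commute_algebraMap_left μ (star S)).isStarNormal_sub
  refine hμ (isUnit_of_isStarNormal_of_antilipschitz hnormal (K := ε.toNNReal⁻¹)
    (antilipschitz_of_bound _ fun x => ?_))
  rw [norm_algebraMap_sub_apply, NNReal.coe_inv, Real.coe_toNNReal _ hε.le, ← div_eq_inv_mul,
    le_div_iff₀ hε, mul_comm]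
  exact hle x

end InnerProductSpace

end ContinuousLinearMap

namespace TensorProduct

variable {𝕜 E G W : Type*} [RCLike 𝕜] [NormedAddCommGroup E] [InnerProductSpace 𝕜 E]
  [NormedAddCommGroup G] [InnerProductSpace 𝕜 G] [NormedAddCommGroup W] [InnerProductSpace 𝕜 W]
  {tm : E →ₗ[𝕜] G →ₗ[𝕜] W}

theorem inner_lift_lift
    (htm : ∀ x x' y y', inner 𝕜 (tm x y) (tm x' y') = inner 𝕜 x x' * inner 𝕜 y y')
    (u v : E ⊗[𝕜] G) : inner 𝕜 (lift tm u) (lift tm v) = inner 𝕜 u v := by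
  induction u using TensorProduct.induction_on with
  | zero => simp
  | tmul x y =>
    induction v using TensorProduct.induction_on with
    | zero => simp
    | tmul x' y' => simp [htm]
    | add v v' hv hv' => simp only [map_add, inner_add_right, hv, hv']
  | add u u' hu hu' => simp only [map_add, inner_add_left, hu, hu']

def liftIsometry
    (htm : ∀ x x' y y', inner 𝕜 (tm x y) (tm x' y') = inner 𝕜 x x' * inner 𝕜 y y') :
    E ⊗[𝕜] G →ₗᵢ[𝕜] W :=
  (lift tm).isometryOfInner (inner_lift_lift htm)

variable (htm : ∀ x x' y y', inner 𝕜 (tm x y) (tm x' y') = inner 𝕜 x x' * inner 𝕜 y y')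

@[simp]
theorem liftIsometry_tmul (x : E) (y : G) : liftIsometry htm (x ⊗ₜ y) = tm x y :=
  lift.tmul x y

include htm in
theorem norm_apply_apply_of_inner (x : E) (y : G) : ‖tm x y‖ = ‖x‖ * ‖y‖ := by
  rw [← liftIsometry_tmul htm, LinearIsometry.norm_map, norm_tmul]

theorem denseRange_liftIsometry
    (hdense : Dense (Submodule.span 𝕜 (Set.range fun p : E × G => tm p.1 p.2) : Set W)) :
    DenseRange (liftIsometry htm) := by
  have hspan :
      Submodule.span 𝕜 (Set.range fun p : E × G => tm p.1 p.2) ≤ LinearMap.range (lift tm) :=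
    Submodule.span_le.mpr <| by
      rintro _ ⟨⟨x, y⟩, rfl⟩
      exact ⟨x ⊗ₜ y, lift.tmul x y⟩
  exact hdense.mono hspan

end TensorProduct

section TensorSum

variable {H1 H2 W : Type*} [NormedAddCommGroup H1] [InnerProductSpace ℂ H1]
  [NormedAddCommGroup H2] [InnerProductSpace ℂ H2] [NormedAddCommGroup W] [InnerProductSpace ℂ W]
  {A : H1 →L[ℂ] H1} {B : H2 →L[ℂ] H2} {T : W →L[ℂ] W} {tm : H1 →ₗ[ℂ] H2 →ₗ[ℂ] W}

theorem spectrum_subset_add_of_tensor [CompleteSpace W]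
    (htm : ∀ x x' y y', inner ℂ (tm x y) (tm x' y') = inner ℂ x x' * inner ℂ y y')
    (hdense : Dense (Submodule.span ℂ (Set.range fun p : H1 × H2 => tm p.1 p.2) : Set W))
    (hT : ∀ x y, T (tm x y) = tm (A x) y + tm x (B y)) :
    spectrum ℂ T ⊆ spectrum ℂ A + spectrum ℂ B := by
  set ψ := (TensorProduct.liftIsometry htm).extendEnd
    (TensorProduct.denseRange_liftIsometry htm hdense)
  have hsum : T = ψ (A.rTensor H2) + ψ (B.lTensor H1) := by
    refine ContinuousLinearMap.ext_on hdense ?_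
    rintro _ ⟨⟨x, y⟩, rfl⟩
    dsimp only
    rw [add_apply, ← TensorProduct.liftIsometry_tmul htm,
      LinearIsometry.extendEnd_apply, LinearIsometry.extendEnd_apply]
    simp [hT]
  rw [hsum]
  refine (((A.commute_rTensor_lTensor B).map ψ).spectrum_add_subset).trans ?_
  exact Set.add_subset_add
    (AlgHom.spectrum_apply_subset (ψ.comp (ContinuousLinearMap.rTensorAlgHom ℂ H1 H2)) A)
    (AlgHom.spectrum_apply_subset (ψ.comp (ContinuousLinearMap.lTensorAlgHom ℂ H1 H2)) B)

theorem add_subset_spectrum_of_tensor [CompleteSpace H1] [CompleteSpace H2]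
    (hA : IsStarNormal A) (hB : IsStarNormal B)
    (htm : ∀ x x' y y', inner ℂ (tm x y) (tm x' y') = inner ℂ x x' * inner ℂ y y')
    (hT : ∀ x y, T (tm x y) = tm (A x) y + tm x (B y)) :
    spectrum ℂ A + spectrum ℂ B ⊆ spectrum ℂ T := by
  rintro _ ⟨α, hα, β, hβ, rfl⟩
  exact ((ContinuousLinearMap.isApproxEigenvalue_of_mem_spectrum hA hα).tensor_add
    (TensorProduct.norm_apply_apply_of_inner htm) hT
    (ContinuousLinearMap.isApproxEigenvalue_of_mem_spectrum hB hβ)).mem_spectrum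

end TensorSum

/-- Spectrum of a tensor sum: if `T = H₁ ⊗ I + I ⊗ H₂` on the Hilbert tensor product
`W` of `𝓗₁` and `𝓗₂` (encoded by a bilinear map `tm` with dense span satisfying the
tensor-product inner-product identity), then `σ(T) = σ(H₁) + σ(H₂)` (Minkowski sum). -/
theorem stmt13 {H1 H2 W : Type*}
    [NormedAddCommGroup H1] [InnerProductSpace ℂ H1] [CompleteSpace H1]
    [NormedAddCommGroup H2] [InnerProductSpace ℂ H2] [CompleteSpace H2]
    [NormedAddCommGroup W] [InnerProductSpace ℂ W] [CompleteSpace W]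
    (A : H1 →L[ℂ] H1) (B : H2 →L[ℂ] H2)
    (hA : IsSelfAdjoint A) (hB : IsSelfAdjoint B)
    (T : W →L[ℂ] W) (tm : H1 →ₗ[ℂ] H2 →ₗ[ℂ] W)
    (htm : ∀ (x x' : H1) (y y' : H2),
      (inner ℂ (tm x y) (tm x' y') : ℂ) = (inner ℂ x x' : ℂ) * (inner ℂ y y' : ℂ))
    (hdense : Dense
      (Submodule.span ℂ (Set.range fun p : H1 × H2 => tm p.1 p.2) : Set W))
    (hT : ∀ (x : H1) (y : H2), T (tm x y) = tm (A x) y + tm x (B y)) :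
    spectrum ℂ T = spectrum ℂ A + spectrum ℂ B :=
  (spectrum_subset_add_of_tensor htm hdense hT).antisymm
    (add_subset_spectrum_of_tensor hA.isStarNormal hB.isStarNormal htm hT)
end
end

section
/- Let u be a nonnegative continuous function on [0,1], and let {ν_n} be an orthonormal sequence in L²[0,1] with ν_n supported in [p_n, p_{n+1}] (where p_n ↑ 1). Set q_n = sup_{x ∈ [p_n, p_{n+1}]} u(x), and let K be the self-adjoint positive integral operator with kernel k(x,s) = Σ λ_n ν_n(x)ν_n(s), λ_n > 0, Σ λ_n² < ∞. If q_n < λ_n for all n ≥ n₀, then ((U−K)ν_n, ν_n) < 0 for all n ≥ n₀; consequently U − K has infinitely many negative eigenvalues accumulating at 0. -/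
open MeasureTheory Set Filter

noncomputable section

/-!
On the support of `ν n` the multiplier `u` is at most `q n`, while `K (ν n) = λ n • ν n`; this
gives the sign of the quadratic form. For the eigenvalues, solve `(U - K) x = -s x` with
`x = (u + s)⁻¹ ν n`: the `ν k` have disjoint supports, so `K x = λ n ⟪ν n, x⟫ ν n` and `x` is an
eigenvector as soon as `λ n ∫ |ν n|² / (u + s) = 1` (a Birman–Schwinger condition). The left side
is continuous in `s`, at least `1` at `s = λ n - q n` and at most `1` at `s = λ n`, so the
intermediate value theorem gives an eigenvalue `-s n ∈ [-λ n, -(λ n - q n)]`. Since `λ n → 0`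
these eigenvalues tend to `0`, and a subsequence of them is injective.
-/

open Topology

section MultiplicationOperator

variable {α : Type*} [MeasurableSpace α] {μ : Measure α}

theorem Complex.inner_ofReal_mul_self (z : ℂ) (r : ℝ) :
    inner ℂ z ((r : ℂ) * z) = ((r * ‖z‖ ^ 2 : ℝ) : ℂ) := by
  rw [RCLike.inner_apply, mul_assoc, Complex.mul_conj']
  push_cast
  rfl

theorem inner_eq_integral_mul_norm_sq {f h : Lp ℂ 2 μ} {φ : α → ℝ}
    (hh : h =ᵐ[μ] fun t => (φ t : ℂ) * f t) :
    inner ℂ f h = ((∫ t, φ t * ‖f t‖ ^ 2 ∂μ : ℝ) : ℂ) := by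
  rw [L2.inner_def, ← integral_complex_ofReal]
  refine integral_congr_ae (hh.mono fun t ht => ?_)
  simp only [ht, Complex.inner_ofReal_mul_self]

theorem integrable_mul_norm_sq {f h : Lp ℂ 2 μ} {φ : α → ℝ}
    (hh : h =ᵐ[μ] fun t => (φ t : ℂ) * f t) :
    Integrable (fun t => φ t * ‖f t‖ ^ 2) μ := by
  refine (L2.integrable_inner (𝕜 := ℂ) f h).re.congr (hh.mono fun t ht => ?_)
  simp only [ht, Complex.inner_ofReal_mul_self, RCLike.re_to_complex, Complex.ofReal_re]

theorem integral_norm_sq (f : Lp ℂ 2 μ) : ∫ t, ‖f t‖ ^ 2 ∂μ = ‖f‖ ^ 2 := by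
  have h := inner_eq_integral_mul_norm_sq (φ := 1)
    (Eventually.of_forall fun t => (one_mul (f t)).symm)
  rw [inner_self_eq_norm_sq_to_K] at h
  simpa [← Complex.ofReal_pow] using h.symm

theorem integrable_norm_sq (f : Lp ℂ 2 μ) : Integrable (fun t => ‖f t‖ ^ 2) μ := by
  simpa using integrable_mul_norm_sq (φ := 1) (Eventually.of_forall fun t => (one_mul (f t)).symm)

theorem reApplyInnerSelf_le_of_ae_le {U : Lp ℂ 2 μ →L[ℂ] Lp ℂ 2 μ} {w : α → ℝ}
    {f : Lp ℂ 2 μ} {c : ℝ} (hU : U f =ᵐ[μ] fun t => (w t : ℂ) * f t)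
    (hc : ∀ᵐ t ∂μ, f t ≠ 0 → w t ≤ c) :
    U.reApplyInnerSelf f ≤ c * ‖f‖ ^ 2 := by
  rw [ContinuousLinearMap.reApplyInnerSelf_apply, inner_re_symm, inner_eq_integral_mul_norm_sq hU,
    RCLike.re_to_complex, Complex.ofReal_re, ← integral_norm_sq, ← integral_const_mul]
  refine integral_mono_ae (integrable_mul_norm_sq hU) ((integrable_norm_sq f).const_mul c)
    (hc.mono fun t ht => ?_)
  by_cases h0 : f t = 0
  · simp [h0]
  · exact mul_le_mul_of_nonneg_right (ht h0) (sq_nonneg _)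

/-- `∫ |f|² / (w + s) = ⟪f, (w + s)⁻¹ f⟫`, the quadratic form of the resolvent of multiplication
by `w` at `-s`. -/
def resolventForm (μ : Measure α) (w : α → ℝ) (f : α → ℂ) (s : ℝ) : ℝ :=
  ∫ t, (w t + s)⁻¹ * ‖f t‖ ^ 2 ∂μ

variable {w : α → ℝ} {a s : ℝ}

theorem ae_norm_inv_add_le (hw0 : 0 ≤ᵐ[μ] w) (ha : 0 < a) (has : a ≤ s) :
    ∀ᵐ t ∂μ, ‖(w t + s)⁻¹‖ ≤ a⁻¹ :=
  hw0.mono fun t ht => by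
    have ht : 0 ≤ w t := ht
    rw [norm_inv, Real.norm_of_nonneg (by linarith)]
    exact inv_anti₀ ha (by linarith)

theorem aestronglyMeasurable_inv_add (hw : AEStronglyMeasurable w μ) (s : ℝ) :
    AEStronglyMeasurable (fun t => (w t + s)⁻¹) μ :=
  (hw.aemeasurable.add_const s).inv.aestronglyMeasurable

theorem integrable_inv_add_mul_norm_sq (hw : AEStronglyMeasurable w μ) (hw0 : 0 ≤ᵐ[μ] w)
    (hs : 0 < s) (f : Lp ℂ 2 μ) : Integrable (fun t => (w t + s)⁻¹ * ‖f t‖ ^ 2) μ :=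
  (integrable_norm_sq f).bdd_mul (aestronglyMeasurable_inv_add hw s)
    (ae_norm_inv_add_le hw0 hs le_rfl)

theorem exists_ae_eq_inv_add_mul (hw : AEStronglyMeasurable w μ) (hw0 : 0 ≤ᵐ[μ] w)
    (hs : 0 < s) (f : Lp ℂ 2 μ) :
    ∃ x : Lp ℂ 2 μ, x =ᵐ[μ] fun t => (((w t + s)⁻¹ : ℝ) : ℂ) * f t := by
  have hmeas : AEStronglyMeasurable (fun t => (((w t + s)⁻¹ : ℝ) : ℂ) * f t) μ :=
    (Complex.continuous_ofReal.comp_aestronglyMeasurable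
      (aestronglyMeasurable_inv_add hw s)).mul (Lp.aestronglyMeasurable f)
  have hmem := (Lp.memLp f).of_le_mul hmeas <| (ae_norm_inv_add_le hw0 hs le_rfl).mono
    fun t ht => by
      rw [norm_mul, Complex.norm_real]
      exact mul_le_mul_of_nonneg_right ht (norm_nonneg _)
  exact ⟨hmem.toLp _, hmem.coeFn_toLp⟩

theorem continuousOn_resolventForm (hw : AEStronglyMeasurable w μ) (hw0 : 0 ≤ᵐ[μ] w)
    (ha : 0 < a) (f : Lp ℂ 2 μ) : ContinuousOn (resolventForm μ w f) (Ici a) := by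
  refine continuousOn_of_dominated
    (fun s hs => (integrable_inv_add_mul_norm_sq hw hw0 (ha.trans_le hs) f).aestronglyMeasurable)
    (fun s hs => (ae_norm_inv_add_le hw0 ha hs).mono fun t ht => ?_)
    ((integrable_norm_sq f).const_mul a⁻¹) (hw0.mono fun t ht => ?_)
  · rw [norm_mul, norm_pow, norm_norm]
    exact mul_le_mul_of_nonneg_right ht (sq_nonneg _)
  · have ht : 0 ≤ w t := ht
    refine ((continuousOn_const.add continuousOn_id).inv₀ fun s hs => ?_).mul continuousOn_const
    exact (add_pos_of_nonneg_of_pos ht (ha.trans_le hs)).ne'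

theorem resolventForm_le (hw0 : 0 ≤ᵐ[μ] w) (hs : 0 < s) (f : Lp ℂ 2 μ) :
    resolventForm μ w f s ≤ s⁻¹ * ‖f‖ ^ 2 := by
  rw [resolventForm, ← integral_norm_sq, ← integral_const_mul]
  refine integral_mono_of_nonneg (hw0.mono fun t ht => ?_) ((integrable_norm_sq f).const_mul _)
    ((ae_norm_inv_add_le hw0 hs le_rfl).mono fun t ht => ?_)
  · have ht : 0 ≤ w t := ht
    positivity
  · exact mul_le_mul_of_nonneg_right ((le_abs_self _).trans ht) (sq_nonneg _)

theorem le_resolventForm (hw : AEStronglyMeasurable w μ) (hw0 : 0 ≤ᵐ[μ] w) {f : Lp ℂ 2 μ}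
    {c : ℝ} (hc : ∀ᵐ t ∂μ, f t ≠ 0 → w t ≤ c) (hs : 0 < s) :
    (c + s)⁻¹ * ‖f‖ ^ 2 ≤ resolventForm μ w f s := by
  rw [resolventForm, ← integral_norm_sq, ← integral_const_mul]
  refine integral_mono_ae ((integrable_norm_sq f).const_mul _)
    (integrable_inv_add_mul_norm_sq hw hw0 hs f) ((hc.and hw0).mono fun t ht => ?_)
  have hwt : 0 ≤ w t := ht.2
  by_cases h0 : f t = 0
  · simp [h0]
  · exact mul_le_mul_of_nonneg_right (inv_anti₀ (by linarith) (by linarith [ht.1 h0]))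
      (sq_nonneg _)

theorem exists_mul_resolventForm_eq_one (hw : AEStronglyMeasurable w μ) (hw0 : 0 ≤ᵐ[μ] w)
    {f : Lp ℂ 2 μ} (hf : ‖f‖ = 1) {c l : ℝ} (hc : ∀ᵐ t ∂μ, f t ≠ 0 → w t ≤ c) (hl : 0 < l)
    (hcl : c < l) : ∃ s ∈ Ioc 0 l, l * resolventForm μ w f s = 1 := by
  -- `max c 0` keeps the left end `l - c'` of the search interval below `l`
  set c' := max c 0
  have hc' : ∀ᵐ t ∂μ, f t ≠ 0 → w t ≤ c' := hc.mono fun t ht h0 => (ht h0).trans (le_max_left _ _)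
  have ha : 0 < l - c' := sub_pos.2 (max_lt hcl hl)
  have hal : l - c' ≤ l := sub_le_self _ (le_max_right _ _)
  have hFa : l⁻¹ ≤ resolventForm μ w f (l - c') := by
    simpa [hf] using le_resolventForm hw hw0 hc' ha
  have hFl : resolventForm μ w f l ≤ l⁻¹ := by simpa [hf] using resolventForm_le hw0 hl f
  obtain ⟨s, hs, hFs⟩ := intermediate_value_Icc' hal
    ((continuousOn_resolventForm hw hw0 ha f).mono Icc_subset_Ici_self) ⟨hFl, hFa⟩
  exact ⟨s, ⟨ha.trans_le hs.1, hs.2⟩, by rw [hFs, mul_inv_cancel₀ hl.ne']⟩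

end MultiplicationOperator

section DiagonalOperator

variable {E ι : Type*} [NormedAddCommGroup E] [InnerProductSpace ℂ E] {K : E →L[ℂ] E}
  {ν : ι → E} {lam : ι → ℝ}

theorem apply_eq_smul_of_inner_eq_zero
    (hK : ∀ f, K f = ∑' n, ((lam n : ℂ) * inner ℂ (ν n) f) • ν n) {x : E} {m : ι}
    (hx : ∀ k ≠ m, inner ℂ (ν k) x = 0) : K x = ((lam m : ℂ) * inner ℂ (ν m) x) • ν m := by
  rw [hK, tsum_eq_single m fun k hk => by rw [hx k hk, mul_zero, zero_smul]]

theorem apply_eq_smul_of_orthonormal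
    (hK : ∀ f, K f = ∑' n, ((lam n : ℂ) * inner ℂ (ν n) f) • ν n) (hν : Orthonormal ℂ ν)
    (m : ι) : K (ν m) = (lam m : ℂ) • ν m := by
  rw [apply_eq_smul_of_inner_eq_zero hK fun k hk => hν.2 hk, inner_self_eq_norm_sq_to_K, hν.1 m]
  simp

end DiagonalOperator

section Eigenvalue

variable {α ι : Type*} [MeasurableSpace α] {μ : Measure α} {w : α → ℝ} {s : ℝ}
  {U K : Lp ℂ 2 μ →L[ℂ] Lp ℂ 2 μ} {ν : ι → Lp ℂ 2 μ} {lam : ι → ℝ} {m : ι}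

theorem reApplyInnerSelf_sub_lt_zero_of_ae_le (hU : U (ν m) =ᵐ[μ] fun t => (w t : ℂ) * ν m t)
    (hK : ∀ f, K f = ∑' n, ((lam n : ℂ) * inner ℂ (ν n) f) • ν n) (hν : Orthonormal ℂ ν) {c : ℝ}
    (hc : ∀ᵐ t ∂μ, ν m t ≠ 0 → w t ≤ c) (hcl : c < lam m) :
    (U - K).reApplyInnerSelf (ν m) < 0 := by
  have hUm := reApplyInnerSelf_le_of_ae_le hU hc
  have hKm : RCLike.re (inner ℂ (K (ν m)) (ν m)) = lam m := by
    rw [apply_eq_smul_of_orthonormal hK hν, inner_smul_left, inner_self_eq_norm_sq_to_K, hν.1 m]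
    simp
  rw [hν.1 m, one_pow, mul_one, ContinuousLinearMap.reApplyInnerSelf_apply] at hUm
  rw [ContinuousLinearMap.reApplyInnerSelf_apply, sub_apply, inner_sub_left, map_sub, hKm]
  linarith

theorem hasEigenvalue_sub_of_mul_resolventForm_eq_one (hw : AEStronglyMeasurable w μ)
    (hw0 : 0 ≤ᵐ[μ] w) (hU : ∀ f : Lp ℂ 2 μ, U f =ᵐ[μ] fun t => (w t : ℂ) * f t)
    (hK : ∀ f, K f = ∑' n, ((lam n : ℂ) * inner ℂ (ν n) f) • ν n)
    (hdisj : ∀ k ≠ m, ∀ᵐ t ∂μ, ν k t = 0 ∨ ν m t = 0) (hs : 0 < s)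
    (hF : lam m * resolventForm μ w (ν m) s = 1) :
    Module.End.HasEigenvalue ((U - K : Lp ℂ 2 μ →L[ℂ] Lp ℂ 2 μ) : Lp ℂ 2 μ →ₗ[ℂ] Lp ℂ 2 μ)
      ((-s : ℝ) : ℂ) := by
  obtain ⟨x, hx⟩ := exists_ae_eq_inv_add_mul hw hw0 hs (ν m)
  have hxm : inner ℂ (ν m) x = resolventForm μ w (ν m) s := inner_eq_integral_mul_norm_sq hx
  have hxk : ∀ k ≠ m, inner ℂ (ν k) x = 0 := fun k hk => by
    rw [L2.inner_def]
    refine integral_eq_zero_of_ae (((hdisj k hk).and hx).mono fun t ht => ?_)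
    rcases ht with ⟨h0 | h0, hxt⟩
    · simp only [h0, inner_zero_left, Pi.zero_apply]
    · simp only [hxt, h0, mul_zero, inner_zero_right, Pi.zero_apply]
  have hKx : K x = ν m := by
    rw [apply_eq_smul_of_inner_eq_zero hK hxk, hxm, ← Complex.ofReal_mul, hF,
      Complex.ofReal_one, one_smul]
  have hUx : U x + (s : ℂ) • x = ν m := by
    refine Lp.ext ?_
    filter_upwards [Lp.coeFn_add (U x) ((s : ℂ) • x), Lp.coeFn_smul (s : ℂ) x, hU x, hx, hw0]
      with t hadd hsmul hUt hxt hwt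
    have hws : (w t : ℂ) + s ≠ 0 := by
      have hwt : 0 ≤ w t := hwt
      exact_mod_cast (add_pos_of_nonneg_of_pos hwt hs).ne'
    rw [hadd, Pi.add_apply, hsmul, Pi.smul_apply, hUt, smul_eq_mul, hxt, ← add_mul, ← mul_assoc,
      Complex.ofReal_inv, Complex.ofReal_add, mul_inv_cancel₀ hws, one_mul]
  have hx0 : x ≠ 0 := by
    rintro rfl
    rw [inner_zero_right, eq_comm, Complex.ofReal_eq_zero] at hxm
    rw [hxm, mul_zero] at hF
    exact zero_ne_one hF
  refine Module.End.hasEigenvalue_of_hasEigenvector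
    ⟨Module.End.mem_eigenspace_iff.2 ?_, hx0⟩
  change U x - K x = _
  rw [hKx, ← hUx, Complex.ofReal_neg, neg_smul]
  abel

end Eigenvalue

theorem ae_le_sSup_image_of_ae_eq_zero_off {α β : Type*} [TopologicalSpace α]
    [MeasurableSpace α] {μ : Measure α} [Zero β] {u : α → ℝ} {f : α → β} {s k : Set α}
    (hu : ContinuousOn u s) (hk : IsCompact k) (hks : k ⊆ s) (hf : ∀ᵐ t ∂μ, t ∉ k → f t = 0) :
    ∀ᵐ t ∂μ, f t ≠ 0 → u t ≤ sSup (u '' k) :=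
  hf.mono fun _ ht h0 =>
    le_csSup (hk.bddAbove_image (hu.mono hks)) (mem_image_of_mem u (not_not.1 (mt ht h0)))

theorem ae_eq_zero_or_eq_zero_of_ae_eq_zero_off {α β γ : Type*} [MeasurableSpace α]
    {μ : Measure α} [Zero β] [Zero γ] {f : α → β} {g : α → γ} {s k : Set α}
    (hf : ∀ᵐ t ∂μ, t ∉ s → f t = 0) (hg : ∀ᵐ t ∂μ, t ∉ k → g t = 0)
    (hsk : ∀ᵐ t ∂μ, t ∉ s ∩ k) : ∀ᵐ t ∂μ, f t = 0 ∨ g t = 0 := by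
  filter_upwards [hf, hg, hsk] with t hft hgt hsk
  by_contra! h
  exact hsk ⟨not_not.1 (mt hft h.1), not_not.1 (mt hgt h.2)⟩

theorem ae_notMem_Icc_inter_Icc {p : ℕ → ℝ} (hp : Monotone p) {k m : ℕ} (hkm : k ≠ m) :
    ∀ᵐ t, t ∉ Icc (p k) (p (k + 1)) ∩ Icc (p m) (p (m + 1)) := by
  refine measure_eq_zero_iff_ae_notMem.1 ?_
  rw [Icc_inter_Icc, Real.volume_Icc, ENNReal.ofReal_eq_zero, sub_nonpos]
  rcases hkm.lt_or_gt with h | h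
  · exact (inf_le_left.trans (hp h)).trans le_sup_right
  · exact (inf_le_right.trans (hp h)).trans le_sup_left

theorem exists_strictMono_injective_comp_of_tendsto_nhdsGT_zero {s : ℕ → ℝ}
    (hs : Tendsto s atTop (𝓝[>] 0)) : ∃ φ : ℕ → ℕ, StrictMono φ ∧ Function.Injective (s ∘ φ) :=
  let ⟨φ, hφ, hsφ⟩ := strictMono_subseq_of_tendsto_atTop hs.inv_tendsto_nhdsGT_zero
  ⟨φ, hφ, Function.Injective.of_comp (f := Inv.inv) hsφ.injective⟩

theorem stmt19_general (u : ℝ → ℝ) (hu : ContinuousOn u (Icc 0 1))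
    (hupos : ∀ t ∈ Icc (0:ℝ) 1, 0 ≤ u t)
    (p : ℕ → ℝ) (hpmono : StrictMono p)
    (hpmem : ∀ n, p n ∈ Icc (0:ℝ) 1)
    (ν : ℕ → L2) (hν : Orthonormal ℂ ν)
    (hsupp : ∀ n, ∀ᵐ x ∂μ01, x ∉ Icc (p n) (p (n + 1)) → (ν n : ℝ → ℂ) x = 0)
    (lam : ℕ → ℝ) (hlam : ∀ n, 0 < lam n) (hlam2 : Summable fun n => lam n ^ 2)
    (U K : L2 →L[ℂ] L2)
    (hU : ∀ f : L2, (U f : ℝ → ℂ) =ᵐ[μ01] fun t => (u t : ℂ) * f t)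
    (hK : ∀ f : L2, K f = ∑' n, ((lam n : ℂ) * (inner ℂ (ν n) f : ℂ)) • ν n)
    (n₀ : ℕ)
    (hqlt : ∀ n ≥ n₀, sSup (u '' Icc (p n) (p (n + 1))) < lam n) :
    (∀ n ≥ n₀, (U - K).reApplyInnerSelf (ν n) < 0) ∧
      ∃ ω : ℕ → ℝ, Function.Injective ω ∧
        (∀ n, ω n < 0 ∧
          Module.End.HasEigenvalue ((U - K : L2 →L[ℂ] L2) : L2 →ₗ[ℂ] L2) ((ω n : ℝ) : ℂ)) ∧
        Tendsto ω atTop (nhds 0) := by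
  have hw : AEStronglyMeasurable u μ01 := hu.aestronglyMeasurable measurableSet_Icc
  have hw0 : 0 ≤ᵐ[μ01] u := (ae_restrict_mem measurableSet_Icc).mono hupos
  have hq : ∀ n, ∀ᵐ t ∂μ01, (ν n : ℝ → ℂ) t ≠ 0 → u t ≤ sSup (u '' Icc (p n) (p (n + 1))) :=
    fun n => ae_le_sSup_image_of_ae_eq_zero_off hu isCompact_Icc
      (Icc_subset_Icc (hpmem n).1 (hpmem (n + 1)).2) (hsupp n)
  have hdisj : ∀ m, ∀ k ≠ m, ∀ᵐ t ∂μ01, (ν k : ℝ → ℂ) t = 0 ∨ (ν m : ℝ → ℂ) t = 0 :=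
    fun m k hkm => ae_eq_zero_or_eq_zero_of_ae_eq_zero_off (hsupp k) (hsupp m)
      (ae_restrict_of_ae (ae_notMem_Icc_inter_Icc hpmono.monotone hkm))
  have heig : ∀ n ≥ n₀, ∃ s ∈ Ioc 0 (lam n),
      Module.End.HasEigenvalue ((U - K : L2 →L[ℂ] L2) : L2 →ₗ[ℂ] L2) ((-s : ℝ) : ℂ) :=
    fun n hn =>
      let ⟨s, hs, hF⟩ := exists_mul_resolventForm_eq_one hw hw0 (hν.1 n) (hq n) (hlam n) (hqlt n hn)
      ⟨s, hs, hasEigenvalue_sub_of_mul_resolventForm_eq_one hw hw0 hU hK (hdisj n) hs.1 hF⟩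
  choose! s hs hseig using heig
  have hlam0 : Tendsto lam atTop (𝓝 0) := by
    simpa [Real.sqrt_sq (hlam _).le] using hlam2.tendsto_atTop_zero.sqrt
  have hs0 : Tendsto (fun j => s (j + n₀)) atTop (𝓝[>] 0) :=
    tendsto_nhdsWithin_iff.2 ⟨squeeze_zero (fun j => (hs _ le_add_self).1.le)
      (fun j => (hs _ le_add_self).2) (hlam0.comp (tendsto_add_atTop_nat n₀)),
      Eventually.of_forall fun j => (hs _ le_add_self).1⟩
  obtain ⟨φ, hφ, hsφ⟩ := exists_strictMono_injective_comp_of_tendsto_nhdsGT_zero hs0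
  refine ⟨fun n hn => reApplyInnerSelf_sub_lt_zero_of_ae_le (hU (ν n)) hK hν (hq n) (hqlt n hn),
    fun j => -s (φ j + n₀), neg_injective.comp hsφ,
    fun j => ⟨neg_neg_of_pos (hs _ le_add_self).1, hseig _ le_add_self⟩, ?_⟩
  simpa [Function.comp_def] using (tendsto_nhds_of_tendsto_nhdsWithin hs0).neg.comp hφ.tendsto_atTop

/-- Example: for `u` continuous, nonnegative, with `u 1 = 0`, and an orthonormal
sequence `ν_n` supported in `[p_n, p_{n+1}]` (with `p_n ↑ 1`), if `K` is the positive
self-adjoint integral operator with kernel `Σ λ_n ν_n(x) ν̄_n(s)` (so `K ν_n = λ_n ν_n`),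
`λ_n > 0`, `Σ λ_n² < ∞`, and `q_n := sup_{[p_n, p_{n+1}]} u < λ_n` for `n ≥ n₀`, then
`((U - K) ν_n, ν_n) < 0` for `n ≥ n₀`, and `U - K` has infinitely many negative
eigenvalues accumulating at `0` (the Efimov effect). -/
theorem stmt19 (u : ℝ → ℝ) (hu : ContinuousOn u (Icc 0 1))
    (hupos : ∀ t ∈ Icc (0:ℝ) 1, 0 ≤ u t) (hu1 : u 1 = 0)
    (p : ℕ → ℝ) (hpmono : StrictMono p) (hp0 : p 0 = 0)
    (hpmem : ∀ n, p n ∈ Icc (0:ℝ) 1) (hplim : Tendsto p atTop (nhds 1))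
    (ν : ℕ → L2) (hν : Orthonormal ℂ ν)
    (hsupp : ∀ n, ∀ᵐ x ∂μ01, x ∉ Icc (p n) (p (n + 1)) → (ν n : ℝ → ℂ) x = 0)
    (lam : ℕ → ℝ) (hlam : ∀ n, 0 < lam n) (hlam2 : Summable fun n => lam n ^ 2)
    (U K : L2 →L[ℂ] L2)
    (hU : ∀ f : L2, (U f : ℝ → ℂ) =ᵐ[μ01] fun t => (u t : ℂ) * f t)
    (hKsa : IsSelfAdjoint K) (hKpos : ∀ f : L2, 0 ≤ K.reApplyInnerSelf f)
    (hK : ∀ f : L2, K f = ∑' n, ((lam n : ℂ) * (inner ℂ (ν n) f : ℂ)) • ν n)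
    (n₀ : ℕ)
    (hqlt : ∀ n ≥ n₀, sSup (u '' Icc (p n) (p (n + 1))) < lam n) :
    (∀ n ≥ n₀, (U - K).reApplyInnerSelf (ν n) < 0) ∧
      ∃ ω : ℕ → ℝ, Function.Injective ω ∧
        (∀ n, ω n < 0 ∧
          Module.End.HasEigenvalue ((U - K : L2 →L[ℂ] L2) : L2 →ₗ[ℂ] L2) ((ω n : ℝ) : ℂ)) ∧
        Tendsto ω atTop (nhds 0) :=
  stmt19_general u hu hupos p hpmono hpmem ν hν hsupp lam hlam hlam2 U K hU hK n₀ hqlt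
end
end
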